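/- Let f be a real number with −1/2 < f < 0 and set y* = −f/(1+f), so 0 < y* < 1. Then for every integer n ≥ 2 and every real r with 0 < r < min(y*, 1−y*), the circle integral ∮_{|y−y*|=r} θ(y)·Ψ̂_n(y;f) dy equals 0. Equivalently, for every n ≥ 2 the residue of θ(y)Ψ_n(y;f) at the ramification point y = −f/(1+f) is 0. -/

import Mathlib

open Complex

/-- The functions `Ψ̂_n(·;f)`, defined recursively by
`Ψ̂_0(y;f) = -1/(f+(f+1)y)^2` and
`Ψ̂_n(y;f) = -(d/dy)[Ψ̂_{n-1}(y;f) · y(y+1)/(f+(f+1)y)]`. -/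
noncomputable def PsiHat (f : ℂ) : ℕ → ℂ → ℂ
  | 0 => fun y => -1 / (f + (f + 1) * y) ^ 2
  | n + 1 => fun y =>
      -deriv (fun w => PsiHat f n w * (w * (w + 1) / (f + (f + 1) * w))) y

/-- The primitive `θ(y) = (f/2)(log y)^2 + (log y)·log(1+y) + Li₂(-y)`,
with `log` the principal branch and `Li₂(w) = ∑_{k≥1} w^k/k^2`. -/
noncomputable def theta (f : ℂ) (y : ℂ) : ℂ :=
  f / 2 * Complex.log y ^ 2 + Complex.log y * Complex.log (1 + y) +
    ∑' k : ℕ, (-y) ^ (k + 1) / ((k : ℂ) + 1) ^ 2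

/-!
Write `u = y - y*` and `G_k = Ψ̂_k · y(y+1)/(f+(f+1)y)`, so that `Ψ̂_{k+1} = -G_k'`. Since
`θ'(y) = log y · (f+(f+1)y)/(y(y+1))`, two integrations by parts give
`θ Ψ̂_{m+2} = -(θ G_{m+1})' - (log y · G_m)' + Ψ̂_m · (y+1)/(f+(f+1)y)`.
Every `Ψ̂_k` is a Laurent polynomial in `u` with exponents `≤ -2`, and multiplying it by
`(y+1)/(f+(f+1)y) = (1 + (y*+1)/u)/(1+f)` keeps this, so the last term has no `u⁻¹` term and
therefore a primitive off `y*`. Hence `θ Ψ̂_{m+2}` is a derivative along the circle.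
-/

theorem hasDerivAt_sub_zpow {𝕜 : Type*} [NontriviallyNormedField 𝕜] (ρ : 𝕜) (k : ℤ) {y : 𝕜}
    (hy : y ≠ ρ) : HasDerivAt (fun w => (w - ρ) ^ k) (k * (y - ρ) ^ (k - 1)) y :=
  (hasDerivAt_zpow k (y - ρ) (.inl (sub_ne_zero.2 hy))).comp_sub_const y ρ

/-- `g` agrees, off `ρ`, with a Laurent polynomial in `y - ρ` all of whose exponents are `≤ N`. -/
inductive IsLaurentPolyLE (ρ : ℂ) (N : ℤ) : (ℂ → ℂ) → Prop
  | zpow (c : ℂ) {k : ℤ} : k ≤ N → IsLaurentPolyLE ρ N fun y => c * (y - ρ) ^ k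
  | add {g h : ℂ → ℂ} :
      IsLaurentPolyLE ρ N g → IsLaurentPolyLE ρ N h → IsLaurentPolyLE ρ N (g + h)
  | congr {g h : ℂ → ℂ} : IsLaurentPolyLE ρ N g → Set.EqOn g h {ρ}ᶜ → IsLaurentPolyLE ρ N h

namespace IsLaurentPolyLE

variable {ρ : ℂ} {M N : ℤ} {g h : ℂ → ℂ}

theorem mono (hMN : M ≤ N) (hg : IsLaurentPolyLE ρ M g) : IsLaurentPolyLE ρ N g := by
  induction hg with
  | zpow c hk => exact zpow c (hk.trans hMN)
  | add _ _ ihg ihh => exact ihg.add ihh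
  | congr _ hgh ih => exact ih.congr hgh

theorem const (c : ℂ) : IsLaurentPolyLE ρ 0 fun _ => c :=
  (zpow c le_rfl).congr fun y _ => by simp

theorem id : IsLaurentPolyLE ρ 1 id :=
  ((zpow ρ zero_le_one).add (zpow 1 le_rfl)).congr fun y _ => by simp

theorem zpow_mul (c : ℂ) (j : ℤ) (hg : IsLaurentPolyLE ρ N g) :
    IsLaurentPolyLE ρ (j + N) fun y => c * (y - ρ) ^ j * g y := by
  induction hg with
  | @zpow d k hk =>
    refine (zpow (c * d) (by omega : j + k ≤ j + N)).congr fun y hy => ?_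
    simp only [zpow_add₀ (sub_ne_zero.2 hy)]
    ring
  | add _ _ ihg ihh => exact (ihg.add ihh).congr fun y _ => by simp [mul_add]
  | congr _ hgh ih => exact ih.congr fun y hy => by simp [hgh hy]

theorem mul (hg : IsLaurentPolyLE ρ M g) (hh : IsLaurentPolyLE ρ N h) :
    IsLaurentPolyLE ρ (M + N) (g * h) := by
  induction hg with
  | @zpow c k hk => exact ((hh.zpow_mul c k).mono (by omega)).congr fun y _ => rfl
  | add _ _ ihg ihh => exact (ihg.add ihh).congr fun y _ => by simp [add_mul]
  | congr _ hgh ih => exact ih.congr fun y hy => by simp [hgh hy]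

theorem exists_hasDerivAt (hg : IsLaurentPolyLE ρ N g) :
    ∃ g', IsLaurentPolyLE ρ (N - 1) g' ∧ ∀ y ≠ ρ, HasDerivAt g (g' y) y := by
  induction hg with
  | @zpow c k hk =>
    refine ⟨fun y => c * k * (y - ρ) ^ (k - 1), zpow _ (by omega), fun y hy => ?_⟩
    simpa only [mul_assoc] using (hasDerivAt_sub_zpow ρ k hy).const_mul c
  | add _ _ ihg ihh =>
    obtain ⟨g', hg', hgd⟩ := ihg
    obtain ⟨h', hh', hhd⟩ := ihh
    exact ⟨g' + h', hg'.add hh', fun y hy => (hgd y hy).add (hhd y hy)⟩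
  | congr _ hgh ih =>
    obtain ⟨g', hg', hgd⟩ := ih
    refine ⟨g', hg', fun y hy => (hgd y hy).congr_of_eventuallyEq ?_⟩
    exact Filter.eventuallyEq_of_mem (isOpen_compl_singleton.mem_nhds hy) fun _ hw =>
      (hgh hw).symm

theorem differentiableAt (hg : IsLaurentPolyLE ρ N g) {y : ℂ} (hy : y ≠ ρ) :
    DifferentiableAt ℂ g y :=
  let ⟨_, _, hgd⟩ := hg.exists_hasDerivAt
  (hgd y hy).differentiableAt

theorem deriv (hg : IsLaurentPolyLE ρ N g) : IsLaurentPolyLE ρ (N - 1) (deriv g) :=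
  let ⟨_, hg', hgd⟩ := hg.exists_hasDerivAt
  hg'.congr fun y hy => (hgd y hy).deriv.symm

theorem exists_primitive (hN : N ≤ -2) (hg : IsLaurentPolyLE ρ N g) :
    ∃ G : ℂ → ℂ, ∀ y ≠ ρ, HasDerivAt G (g y) y := by
  induction hg with
  | @zpow c k hk =>
    have hk1 : (k : ℂ) + 1 ≠ 0 := by exact_mod_cast (by omega : k + 1 ≠ 0)
    refine ⟨fun y => c / (k + 1) * (y - ρ) ^ (k + 1), fun y hy => ?_⟩
    refine ((hasDerivAt_sub_zpow ρ (k + 1) hy).const_mul (c / (k + 1))).congr_deriv ?_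
    rw [add_sub_cancel_right, Int.cast_add, Int.cast_one]
    field_simp
  | add _ _ ihg ihh =>
    obtain ⟨G, hG⟩ := ihg
    obtain ⟨H, hH⟩ := ihh
    exact ⟨G + H, fun y hy => (hG y hy).add (hH y hy)⟩
  | congr _ hgh ih =>
    obtain ⟨G, hG⟩ := ih
    exact ⟨G, fun y hy => hgh hy ▸ hG y hy⟩

end IsLaurentPolyLE

noncomputable def ramificationPoint (f : ℂ) : ℂ := -f / (1 + f)

section PsiHat

variable {f : ℂ}

theorem add_mul_eq_mul_sub_ramificationPoint (hf : f + 1 ≠ 0) (y : ℂ) :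
    f + (f + 1) * y = (f + 1) * (y - ramificationPoint f) := by
  rw [ramificationPoint, add_comm 1 f]
  field_simp
  ring

theorem isLaurentPolyLE_succ_div (hf : f + 1 ≠ 0) :
    IsLaurentPolyLE (ramificationPoint f) 0 fun y => (y + 1) / (f + (f + 1) * y) := by
  refine ((IsLaurentPolyLE.zpow ((f + 1)⁻¹) le_rfl).add
    (IsLaurentPolyLE.zpow ((ramificationPoint f + 1) / (f + 1)) (k := -1) (by norm_num))).congr
    fun y hy => ?_
  have hu : y - ramificationPoint f ≠ 0 := sub_ne_zero.2 hy
  simp only [Pi.add_apply, add_mul_eq_mul_sub_ramificationPoint hf, zpow_zero, zpow_neg_one]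
  field_simp
  ring

theorem isLaurentPolyLE_mul_succ_div (hf : f + 1 ≠ 0) :
    IsLaurentPolyLE (ramificationPoint f) 1 fun y => y * (y + 1) / (f + (f + 1) * y) :=
  (IsLaurentPolyLE.id.mul (isLaurentPolyLE_succ_div hf)).congr fun _ _ => (mul_div_assoc ..).symm

theorem isLaurentPolyLE_psiHat (hf : f + 1 ≠ 0) (n : ℕ) :
    IsLaurentPolyLE (ramificationPoint f) (-2) (PsiHat f n) := by
  induction n with
  | zero =>
    refine (IsLaurentPolyLE.zpow (-((f + 1) ^ 2)⁻¹) le_rfl).congr fun y hy => ?_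
    have hu : y - ramificationPoint f ≠ 0 := sub_ne_zero.2 hy
    simp only [PsiHat, add_mul_eq_mul_sub_ramificationPoint hf, zpow_neg, zpow_two]
    field_simp
  | succ n ih =>
    have hG := (ih.mul (isLaurentPolyLE_mul_succ_div hf)).deriv
    exact (((IsLaurentPolyLE.const (-1)).mul hG).mono (by norm_num)).congr fun y _ => by
      rw [PsiHat, Pi.mul_apply, neg_one_mul]; rfl

theorem hasDerivAt_psiHat_mul (hf : f + 1 ≠ 0) (n : ℕ) {y : ℂ} (hy : y ≠ ramificationPoint f) :
    HasDerivAt (fun w => PsiHat f n w * (w * (w + 1) / (f + (f + 1) * w)))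
      (-PsiHat f (n + 1) y) y := by
  rw [PsiHat, neg_neg]
  exact (((isLaurentPolyLE_psiHat hf n).mul (isLaurentPolyLE_mul_succ_div hf)).differentiableAt
    hy).hasDerivAt

end PsiHat

theorem hasDerivAt_tsum_pow_succ_div_sq {z : ℂ} (hz₀ : z ≠ 0) (hz : ‖z‖ < 1) :
    HasDerivAt (fun w => ∑' k : ℕ, w ^ (k + 1) / ((k : ℂ) + 1) ^ 2)
      (-log (1 - z) / z) z := by
  obtain ⟨R, hzR, hR₁⟩ := exists_between hz
  have hR₀ : 0 < R := (norm_nonneg z).trans_lt hzR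
  have hderiv : HasDerivAt (fun w => ∑' k : ℕ, w ^ (k + 1) / ((k : ℂ) + 1) ^ 2)
      (∑' k : ℕ, z ^ k / ((k : ℂ) + 1)) z := by
    refine hasDerivAt_tsum_of_isPreconnected
      (g' := fun (k : ℕ) (w : ℂ) => w ^ k / ((k : ℂ) + 1)) (summable_geometric_of_lt_one hR₀.le hR₁)
      Metric.isOpen_ball (convex_ball 0 R).isPreconnected (fun k w _ => ?_) (fun k w hw => ?_)
      (Metric.mem_ball_self hR₀) ?_ (mem_ball_zero_iff.2 hzR)
    · have hk : (k : ℂ) + 1 ≠ 0 := Nat.cast_add_one_ne_zero k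
      refine ((hasDerivAt_pow (k + 1) w).div_const _).congr_deriv ?_
      push_cast
      field_simp
    · have hk : (1 : ℝ) ≤ ‖(k : ℂ) + 1‖ := by
        rw [← Nat.cast_add_one, norm_natCast]
        exact_mod_cast Nat.le_add_left 1 k
      rw [norm_div, norm_pow]
      calc ‖w‖ ^ k / ‖(k : ℂ) + 1‖ ≤ ‖w‖ ^ k := div_le_self (by positivity) hk
        _ ≤ R ^ k := by gcongr; exact (mem_ball_zero_iff.1 hw).le
    · simp
  refine hderiv.congr_deriv ((hasSum_taylorSeries_neg_log' hz).div_const z |>.tsum_eq ▸ ?_)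
  exact tsum_congr fun k => by field_simp; ring

theorem hasDerivAt_theta (f : ℂ) {y : ℂ} (hy : y ∈ slitPlane) (hy₁ : ‖y‖ < 1) :
    HasDerivAt (theta f) (log y * (f + (f + 1) * y) / (y * (y + 1))) y := by
  have hy₀ : y ≠ 0 := slitPlane_ne_zero hy
  have h1y : 1 + y ∈ slitPlane := mem_slitPlane_of_norm_lt_one hy₁
  have hdilog := (hasDerivAt_tsum_pow_succ_div_sq (neg_ne_zero.2 hy₀) (by rwa [norm_neg])).comp y
    (hasDerivAt_neg y)
  have hlog1 := (hasDerivAt_log h1y).comp y ((hasDerivAt_id y).const_add 1)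
  have := ((((hasDerivAt_log hy).pow 2).const_mul (f / 2)).add
    ((hasDerivAt_log hy).mul hlog1)).add hdilog
  refine this.congr_deriv ?_
  have hy1 : 1 + y ≠ 0 := slitPlane_ne_zero h1y
  simp only [Function.comp_apply, sub_neg_eq_add, add_comm y 1]
  field_simp
  ring

theorem exists_primitive_theta_mul_psiHat {f : ℂ} (hf : f + 1 ≠ 0) (m : ℕ) :
    ∃ P : ℂ → ℂ, ∀ y ∈ slitPlane, ‖y‖ < 1 → y ≠ ramificationPoint f →
      HasDerivAt P (theta f y * PsiHat f (m + 2) y) y := by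
  obtain ⟨H, hH⟩ :=
    ((isLaurentPolyLE_psiHat hf m).mul (isLaurentPolyLE_succ_div hf)).exists_primitive le_rfl
  let G (k : ℕ) (w : ℂ) := PsiHat f k w * (w * (w + 1) / (f + (f + 1) * w))
  refine ⟨fun w => -(theta f w * G (m + 1) w) - log w * G m w + H w, fun y hy hy₁ hyρ => ?_⟩
  have := (((hasDerivAt_theta f hy hy₁).mul (hasDerivAt_psiHat_mul hf (m + 1) hyρ)).neg.sub
    ((hasDerivAt_log hy).mul (hasDerivAt_psiHat_mul hf m hyρ))).add (hH y hyρ)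
  refine this.congr_deriv ?_
  have hy₀ : y ≠ 0 := slitPlane_ne_zero hy
  have hy1 : y + 1 ≠ 0 := by
    rw [add_comm]; exact slitPlane_ne_zero (mem_slitPlane_of_norm_lt_one hy₁)
  have hL : f + (f + 1) * y ≠ 0 := by
    rw [add_mul_eq_mul_sub_ramificationPoint hf]; exact mul_ne_zero hf (sub_ne_zero.2 hyρ)
  simp only [Pi.mul_apply]
  field_simp
  ring

theorem re_pos_and_norm_lt_one_of_mem_sphere {c r : ℝ} (hc : r < c) (hc₁ : r < 1 - c) {y : ℂ}
    (hy : y ∈ Metric.sphere (c : ℂ) r) : 0 < y.re ∧ ‖y‖ < 1 := by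
  rw [mem_sphere_iff_norm] at hy
  have hre := abs_le.1 (hy ▸ abs_re_le_norm (y - c))
  have hnorm := norm_le_norm_add_norm_sub' y c
  rw [sub_re, ofReal_re] at hre
  rw [norm_real, Real.norm_of_nonneg (by linarith [norm_nonneg (y - c)])] at hnorm
  constructor <;> linarith

theorem residue_theta_psi_ge_two_general
    (f : ℝ) (n : ℕ) (hn : 2 ≤ n)
    (r : ℝ) (hr : 0 < r)
    (hr' : r < min (-f / (1 + f)) (1 - -f / (1 + f))) :
    (∮ y in C(((-f / (1 + f) : ℝ) : ℂ), r),
        theta (f : ℂ) y * PsiHat (f : ℂ) n y) = 0 := by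
  obtain ⟨m, rfl⟩ : ∃ m, n = m + 2 := ⟨n - 2, by omega⟩
  obtain ⟨hr₁, hr₂⟩ := lt_min_iff.1 hr'
  have hf : (f : ℂ) + 1 ≠ 0 := by
    norm_cast
    rintro h
    rw [add_comm, h, div_zero] at hr₁
    linarith
  have hcenter : ((-f / (1 + f) : ℝ) : ℂ) = ramificationPoint f := by
    push_cast [ramificationPoint]; rfl
  obtain ⟨P, hP⟩ := exists_primitive_theta_mul_psiHat hf m
  refine circleIntegral.integral_eq_zero_of_hasDerivWithinAt (f := P) hr.le fun y hy => ?_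
  obtain ⟨hre, hnorm⟩ := re_pos_and_norm_lt_one_of_mem_sphere hr₁ hr₂ hy
  have hyρ : y ≠ ramificationPoint f := hcenter ▸ Metric.ne_of_mem_sphere hy hr.ne'
  exact (hP y (.inl hre) hnorm hyρ).hasDerivWithinAt

/-- Lemma 3.2, `n ≥ 2` case: the residue of `θ(y)Ψ_n(y;f)` at the ramification
point `y* = -f/(1+f)` vanishes for every `n ≥ 2`, i.e. the circle integral of
`θ · Ψ̂_n` around any sufficiently small circle centered at `y*` is `0`. -/
theorem residue_theta_psi_ge_two
    (f : ℝ) (hf₁ : -1/2 < f) (hf₂ : f < 0) (n : ℕ) (hn : 2 ≤ n)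
    (r : ℝ) (hr : 0 < r)
    (hr' : r < min (-f / (1 + f)) (1 - -f / (1 + f))) :
    (∮ y in C(((-f / (1 + f) : ℝ) : ℂ), r),
        theta (f : ℂ) y * PsiHat (f : ℂ) n y) = 0 :=
  residue_theta_psi_ge_two_general f n hn r hr hr'
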